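/- In Example 1 with true model x = h*θ + n + n_c where n, n_c are independent zero-mean Gaussians with covariances Σ and Σ_c, the asymptotic ZZB for the misspecified model (assuming noise covariance Σ only) equals (h*ᵀΣ⁻¹h* + h*ᵀΣ⁻¹Σ_cΣ⁻¹h*)/(h*ᵀΣ⁻¹h*)², which is greater than or equal to the matched-model bound 1/(h*ᵀ(Σ+Σ_c)⁻¹h*). -/

import Mathlib

/-!
With `u = Σ⁻¹ h*`, the misspecified bound is `(uᵀ (Σ + Σ_c) u) / (h*ᵀ u)²`. Cauchy–Schwarz in the
inner product defined by `Σ + Σ_c`, applied to `(Σ + Σ_c)⁻¹ h*` and `u`, gives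
`(h*ᵀ u)² ≤ (h*ᵀ (Σ + Σ_c)⁻¹ h*) (uᵀ (Σ + Σ_c) u)`, which is the inequality.
-/

open Matrix

namespace Matrix

variable {n : Type*} [Fintype n]

theorem IsSymm.dotProduct_mulVec_comm {A : Matrix n n ℝ} (hA : A.IsSymm) (x y : n → ℝ) :
    x ⬝ᵥ A *ᵥ y = (A *ᵥ x) ⬝ᵥ y := by
  rw [dotProduct_mulVec, ← mulVec_transpose, hA.eq]

theorem PosSemidef.dotProduct_mulVec_sq_le {A : Matrix n n ℝ} (hA : A.PosSemidef) (x y : n → ℝ) :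
    (x ⬝ᵥ A *ᵥ y) ^ 2 ≤ (x ⬝ᵥ A *ᵥ x) * (y ⬝ᵥ A *ᵥ y) := by
  let := A.toSeminormedAddCommGroup hA
  let := A.toInnerProductSpace hA
  have hinner (u v : n → ℝ) : inner ℝ u v = u ⬝ᵥ A *ᵥ v := by
    change (A *ᵥ v) ⬝ᵥ star u = _
    rw [star_trivial, dotProduct_comm]
  simpa only [sq, hinner] using real_inner_mul_inner_self_le x y

variable [DecidableEq n]

theorem PosDef.mulVec_inv_mulVec {A : Matrix n n ℝ} (hA : A.PosDef) (x : n → ℝ) :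
    A *ᵥ (A⁻¹ *ᵥ x) = x := by
  rw [mulVec_mulVec, mul_nonsing_inv _ ((isUnit_iff_isUnit_det A).mp hA.isUnit), one_mulVec]

theorem PosDef.dotProduct_sq_le {A : Matrix n n ℝ} (hA : A.PosDef) (x y : n → ℝ) :
    (x ⬝ᵥ y) ^ 2 ≤ (x ⬝ᵥ A⁻¹ *ᵥ x) * (y ⬝ᵥ A *ᵥ y) := by
  have hsymm : A.IsSymm := isHermitian_iff_isSymm.mp hA.isHermitian
  have hcs := hA.posSemidef.dotProduct_mulVec_sq_le (A⁻¹ *ᵥ x) y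
  rwa [hsymm.dotProduct_mulVec_comm (A⁻¹ *ᵥ x) y, hA.mulVec_inv_mulVec,
    dotProduct_comm _ x] at hcs

/-- Among all `y` with `x ⬝ᵥ y ≠ 0`, the ratio `(yᵀ A y) / (xᵀ y)²` is minimised at `y = A⁻¹ x`. -/
theorem PosDef.one_div_dotProduct_inv_mulVec_le {A : Matrix n n ℝ} (hA : A.PosDef) {x : n → ℝ}
    (hx : x ≠ 0) (y : n → ℝ) (hxy : x ⬝ᵥ y ≠ 0) :
    1 / (x ⬝ᵥ A⁻¹ *ᵥ x) ≤ (y ⬝ᵥ A *ᵥ y) / (x ⬝ᵥ y) ^ 2 := by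
  have hpos : 0 < x ⬝ᵥ A⁻¹ *ᵥ x := by simpa using hA.inv.dotProduct_mulVec_pos hx
  rw [div_le_div_iff₀ hpos (by positivity), one_mul, mul_comm]
  exact hA.dotProduct_sq_le x y

end Matrix

theorem one_div_four_mul_div_two_mul_sqrt_sq (s : ℝ) {N : ℝ} (hN : 0 ≤ N) :
    1 / (4 * (s / (2 * √N)) ^ 2) = N / s ^ 2 := by
  rw [div_pow, mul_pow, Real.sq_sqrt hN, show 4 * (s ^ 2 / (2 ^ 2 * N)) = s ^ 2 / N by ring,
    one_div_div]

theorem zzb_example1_mismatch_ge_matched_general {K : ℕ}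
    (Cov Covc : Matrix (Fin K) (Fin K) ℝ)
    (hpd : Cov.PosDef) (hpdc : Covc.PosDef)
    (hstar : Fin K → ℝ) (hne : hstar ≠ 0) (γ : ℝ)
    (hγ : γ = (hstar ⬝ᵥ Cov⁻¹.mulVec hstar)
        / (2 * Real.sqrt (hstar ⬝ᵥ Cov⁻¹.mulVec hstar
            + hstar ⬝ᵥ Cov⁻¹.mulVec (Covc.mulVec (Cov⁻¹.mulVec hstar))))) :
    1 / (4 * γ ^ 2)
      = (hstar ⬝ᵥ Cov⁻¹.mulVec hstar
          + hstar ⬝ᵥ Cov⁻¹.mulVec (Covc.mulVec (Cov⁻¹.mulVec hstar)))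
        / (hstar ⬝ᵥ Cov⁻¹.mulVec hstar) ^ 2
    ∧ 1 / (hstar ⬝ᵥ (Cov + Covc)⁻¹.mulVec hstar)
        ≤ (hstar ⬝ᵥ Cov⁻¹.mulVec hstar
            + hstar ⬝ᵥ Cov⁻¹.mulVec (Covc.mulVec (Cov⁻¹.mulVec hstar)))
          / (hstar ⬝ᵥ Cov⁻¹.mulVec hstar) ^ 2 := by
  set u := Cov⁻¹ *ᵥ hstar
  have hinv_symm : Cov⁻¹.IsSymm := isHermitian_iff_isSymm.mp hpd.inv.isHermitian
  have hquad : hstar ⬝ᵥ u + hstar ⬝ᵥ Cov⁻¹ *ᵥ (Covc *ᵥ u) = u ⬝ᵥ (Cov + Covc) *ᵥ u := by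
    rw [add_mulVec, dotProduct_add, hpd.mulVec_inv_mulVec, dotProduct_comm hstar,
      hinv_symm.dotProduct_mulVec_comm hstar]
  have hpos : 0 < hstar ⬝ᵥ u := by simpa using hpd.inv.dotProduct_mulVec_pos hne
  have hquad_nonneg : 0 ≤ u ⬝ᵥ (Cov + Covc) *ᵥ u := by
    simpa using (hpd.add hpdc).posSemidef.dotProduct_mulVec_nonneg u
  rw [hquad] at hγ ⊢
  exact ⟨hγ ▸ one_div_four_mul_div_two_mul_sqrt_sq _ hquad_nonneg,
    (hpd.add hpdc).one_div_dotProduct_inv_mulVec_le hne u hpos.ne'⟩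

/-- Example 1: the asymptotic ZZB for the misspecified model (assumed noise
covariance `Σ` when the true covariance is `Σ + Σ_c`) equals
`(h*ᵀΣ⁻¹h* + h*ᵀΣ⁻¹Σ_cΣ⁻¹h*)/(h*ᵀΣ⁻¹h*)²`, and it is at least the
matched-model bound `1/(h*ᵀ(Σ+Σ_c)⁻¹h*)`. -/
theorem zzb_example1_mismatch_ge_matched {K : ℕ}
    (Cov Covc : Matrix (Fin K) (Fin K) ℝ)
    (hs : Cov.IsSymm) (hsc : Covc.IsSymm) (hpd : Cov.PosDef) (hpdc : Covc.PosDef)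
    (hstar : Fin K → ℝ) (hne : hstar ≠ 0) (γ : ℝ)
    (hγ : γ = (hstar ⬝ᵥ Cov⁻¹.mulVec hstar)
        / (2 * Real.sqrt (hstar ⬝ᵥ Cov⁻¹.mulVec hstar
            + hstar ⬝ᵥ Cov⁻¹.mulVec (Covc.mulVec (Cov⁻¹.mulVec hstar))))) :
    1 / (4 * γ ^ 2)
      = (hstar ⬝ᵥ Cov⁻¹.mulVec hstar
          + hstar ⬝ᵥ Cov⁻¹.mulVec (Covc.mulVec (Cov⁻¹.mulVec hstar)))
        / (hstar ⬝ᵥ Cov⁻¹.mulVec hstar) ^ 2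
    ∧ 1 / (hstar ⬝ᵥ (Cov + Covc)⁻¹.mulVec hstar)
        ≤ (hstar ⬝ᵥ Cov⁻¹.mulVec hstar
            + hstar ⬝ᵥ Cov⁻¹.mulVec (Covc.mulVec (Cov⁻¹.mulVec hstar)))
          / (hstar ⬝ᵥ Cov⁻¹.mulVec hstar) ^ 2 :=
  zzb_example1_mismatch_ge_matched_general Cov Covc hpd hpdc hstar hne γ hγ
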